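/- Let R and T be rectangles in ℝ^n of the same type, and let S be a rectangle of a different type. Then for any morphisms χ: 𝕀^R → 𝕀^S and ψ: 𝕀^S → 𝕀^T of persistence modules, the composition ψ ∘ χ is zero. -/

import Mathlib

open CategoryTheory Classical

noncomputable section

/-- Convexity of a subset of a poset. -/
def IsConvex {P : Type} [Preorder P] (I : Set P) : Prop :=
  ∀ ⦃p q r : P⦄, p ∈ I → q ∈ I → p ≤ r → r ≤ q → r ∈ I

/-- Zigzag connectivity within a subset. -/
def ZigzagConnected {P : Type} [Preorder P] (I : Set P) : Prop :=
  ∀ p ∈ I, ∀ q ∈ I,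
    Relation.ReflTransGen (fun a b => a ∈ I ∧ b ∈ I ∧ (a ≤ b ∨ b ≤ a)) p q

/-- An interval in a poset: nonempty, convex, and zigzag connected. -/
def IsIntervalSet {P : Type} [Preorder P] (I : Set P) : Prop :=
  I.Nonempty ∧ IsConvex I ∧ ZigzagConnected I

open scoped Classical in
/-- The pointwise vector space of the interval module: `k` (as `⊤`) on `I`, `0` off `I`. -/
def objSub (k : Type) [Field k] {P : Type} [Preorder P] (I : Set P) (p : P) : Submodule k k :=
  if p ∈ I then ⊤ else ⊥

open scoped Classical in
/-- The interval persistence module `𝕀^I` as a functor `P ⥤ ModuleCat k`. -/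
def intervalModule (k : Type) [Field k] {P : Type} [Preorder P] (I : Set P)
    (hI : IsConvex I) : P ⥤ ModuleCat.{0} k where
  obj p := ModuleCat.of k (objSub k I p)
  map {p q} h :=
    if hpq : p ∈ I ∧ q ∈ I then
      ModuleCat.ofHom
        { toFun := fun x => ⟨(x : k), by simp [objSub, hpq.2]⟩
          map_add' := by intros; rfl
          map_smul' := by intros; rfl }
    else 0
  map_id := by
    intro p
    try dsimp only
    by_cases hp : p ∈ I
    · rw [dif_pos ⟨hp, hp⟩]; rfl
    · rw [dif_neg (fun h => hp h.1)]
      haveI : Subsingleton ↥(objSub k I p) := by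
        rw [objSub, if_neg hp]; infer_instance
      apply ModuleCat.hom_ext; apply LinearMap.ext; intro x
      exact this.allEq _ _
  map_comp := by
    intro p q r hpq hqr
    try dsimp only
    by_cases hpr : p ∈ I ∧ r ∈ I
    · have hq : q ∈ I := hI hpr.1 hpr.2 (leOfHom hpq) (leOfHom hqr)
      rw [dif_pos hpr, dif_pos ⟨hpr.1, hq⟩, dif_pos ⟨hq, hpr.2⟩]
      rfl
    · rw [dif_neg hpr]
      by_cases hp : p ∈ I
      · have hr : r ∉ I := fun hr => hpr ⟨hp, hr⟩
        haveI : Subsingleton ↥(objSub k I r) := by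
          rw [objSub, if_neg hr]; infer_instance
        apply ModuleCat.hom_ext; apply LinearMap.ext; intro x
        exact this.allEq _ _
      · haveI : Subsingleton ↥(objSub k I p) := by
          rw [objSub, if_neg hp]; infer_instance
        apply ModuleCat.hom_ext; apply LinearMap.ext; intro x
        have hx : x = 0 := this.allEq x 0
        rw [hx]
        simp

open DirectSum

open scoped ENNReal

/-- Direct sum of a family of persistence modules. -/
def dsumF (k : Type) [Field k] {P : Type} [Preorder P] {ι : Type}
    (F : ι → P ⥤ ModuleCat.{0} k) : P ⥤ ModuleCat.{0} k where
  obj p := ModuleCat.of k (⨁ i, ((F i).obj p : Type))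
  map {p q} h := ModuleCat.ofHom
    (DFinsupp.mapRange.linearMap (fun i => ((F i).map h).hom))
  map_id := by
    intro p
    try dsimp only
    simp only [CategoryTheory.Functor.map_id, ModuleCat.hom_id]
    apply ModuleCat.hom_ext
    exact DFinsupp.mapRange.linearMap_id
  map_comp := by
    intro p q r hpq hqr
    try dsimp only
    simp only [CategoryTheory.Functor.map_comp]
    apply ModuleCat.hom_ext
    apply LinearMap.ext; intro x
    apply DFinsupp.ext; intro i
    rfl

/-- Use the preorder category structure on `Fin n → ℝ`. -/
instance RnCat (n : ℕ) : Category (Fin n → ℝ) := Preorder.smallCategory _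

/-- Diagonal translation by `ε` as an endofunctor of the poset `Fin n → ℝ`. -/
def transl (n : ℕ) (ε : ℝ) : (Fin n → ℝ) ⥤ (Fin n → ℝ) :=
  Monotone.functor (f := fun p i => p i + ε)
    (fun _ _ hab i => add_le_add_left (hab i) ε)

/-- `M` and `N` are `ε`-interleaved `ℝⁿ`-persistence modules. -/
def Interleaved (k : Type) [Field k] {n : ℕ} (ε : ℝ)
    (M N : (Fin n → ℝ) ⥤ ModuleCat.{0} k) : Prop :=
  ∃ _hε : 0 ≤ ε, ∃ (f : M ⟶ transl n ε ⋙ N) (g : N ⟶ transl n ε ⋙ M),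
    (∀ p : Fin n → ℝ, f.app p ≫ g.app (fun i => p i + ε) =
      M.map (homOfLE (show p ≤ fun i => p i + ε + ε from
        fun i => by show p i ≤ p i + ε + ε; linarith))) ∧
    (∀ p : Fin n → ℝ, g.app p ≫ f.app (fun i => p i + ε) =
      N.map (homOfLE (show p ≤ fun i => p i + ε + ε from
        fun i => by show p i ≤ p i + ε + ε; linarith)))

/-- An interval `I ⊆ ℝⁿ` is `δ`-trivial: it contains no pair `p ≤ p + δ`. -/
def SetTrivial {n : ℕ} (δ : ℝ) (I : Set (Fin n → ℝ)) : Prop :=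
  ¬ ∃ p, p ∈ I ∧ (fun i => p i + δ) ∈ I

/-- Barcode data: an indexed family of nonempty convex intervals in `ℝⁿ`. -/
structure Barcode (n : ℕ) where
  ι : Type
  I : ι → Set (Fin n → ℝ)
  nonempty : ∀ i, (I i).Nonempty
  conv : ∀ i, IsConvex (I i)

/-- The interval decomposable module associated to barcode data. -/
def Barcode.module (k : Type) [Field k] {n : ℕ} (B : Barcode n) :
    (Fin n → ℝ) ⥤ ModuleCat.{0} k :=
  dsumF k fun i => intervalModule k (B.I i) (B.conv i)

/-- `B` is pointwise finite dimensional. -/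
def Barcode.pfd (k : Type) [Field k] {n : ℕ} (B : Barcode n) : Prop :=
  ∀ p : Fin n → ℝ, Module.Finite k ((B.module k).obj p)

/-- An `ε`-matching between two barcodes: a partial bijection such that unmatched
intervals are `2ε`-trivial and matched intervals are `ε`-interleaved. -/
def Matched (k : Type) [Field k] {n : ℕ} (ε : ℝ) (B C : Barcode n) : Prop :=
  0 ≤ ε ∧ ∃ (A : Set B.ι) (A' : Set C.ι) (e : A ≃ A'),
    (∀ i ∉ A, SetTrivial (2 * ε) (B.I i)) ∧
    (∀ j ∉ A', SetTrivial (2 * ε) (C.I j)) ∧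
    (∀ i : A, Interleaved k ε
      (intervalModule k (B.I i) (B.conv i))
      (intervalModule k (C.I (e i)) (C.conv (e i))))

/-- The interleaving distance, valued in `ℝ≥0∞`. -/
def dInt (k : Type) [Field k] {n : ℕ} (M N : (Fin n → ℝ) ⥤ ModuleCat.{0} k) : ℝ≥0∞ :=
  ⨅ (ε : ℝ) (_ : Interleaved k ε M N), ENNReal.ofReal ε

/-- The bottleneck distance between barcodes, valued in `ℝ≥0∞`. -/
def dBot (k : Type) [Field k] {n : ℕ} (B C : Barcode n) : ℝ≥0∞ :=
  ⨅ (ε : ℝ) (_ : Matched k ε B C), ENNReal.ofReal ε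

/-- Rectangles: products of real intervals. -/
def rectSet {n : ℕ} (R : Fin n → Set ℝ) : Set (Fin n → ℝ) := {x | ∀ i, x i ∈ R i}

theorem rectSet_convex {n : ℕ} (R : Fin n → Set ℝ) (h : ∀ i, (R i).OrdConnected) :
    IsConvex (rectSet R) := by
  intro p q r hp hq hpr hrq i
  exact (h i).out (hp i) (hq i) ⟨hpr i, hrq i⟩

/-- A barcode consists of rectangles. -/
def IsRectBarcode {n : ℕ} (B : Barcode n) : Prop :=
  ∀ i, ∃ R : Fin n → Set ℝ,
    (∀ j, (R j).Nonempty ∧ (R j).OrdConnected) ∧ B.I i = rectSet R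

/-- Decorated numbers: an extended real endpoint with a decoration,
`false` = `−` (closed side), `true` = `+` (open side), ordered lexicographically
so that `a⁻ < a⁺` and `a^* < b^*` whenever `a < b`. -/
def DecNum := Lex (EReal × Bool)

noncomputable instance : LinearOrder DecNum :=
  inferInstanceAs (LinearOrder (Lex (EReal × Bool)))

open scoped Classical in
/-- The decorated lower endpoint of a subset of `ℝ`. -/
noncomputable def lowDec (I : Set ℝ) : DecNum :=
  toLex (sInf ((↑) '' I : Set EReal),
    if sInf ((↑) '' I : Set EReal) ∈ ((↑) '' I : Set EReal) then false else true)

open scoped Classical in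
/-- The decorated upper endpoint of a subset of `ℝ`. -/
noncomputable def highDec (I : Set ℝ) : DecNum :=
  toLex (sSup ((↑) '' I : Set EReal),
    if sSup ((↑) '' I : Set EReal) ∈ ((↑) '' I : Set EReal) then true else false)

/-- The decorated point `min_R` of a rectangle with factors `R`. -/
noncomputable def minDec {n : ℕ} (R : Fin n → Set ℝ) : Fin n → DecNum :=
  fun i => lowDec (R i)

/-- The decorated point `max_R` of a rectangle with factors `R`. -/
noncomputable def maxDec {n : ℕ} (R : Fin n → Set ℝ) : Fin n → DecNum :=
  fun i => highDec (R i)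

/-- `u` of a decorated number: the underlying real number, `0` for `±∞`. -/
noncomputable def uDec (d : DecNum) : ℝ := (ofLex d).1.toReal

/-- `α` of a rectangle with factors `R`. -/
noncomputable def alphaR {n : ℕ} (R : Fin n → Set ℝ) : ℝ :=
  (∑ i, uDec (minDec R i)) + (∑ i, uDec (maxDec R i))

open scoped Classical in
/-- `P` of a rectangle: the number of endpoint decorations equal to `+`. -/
noncomputable def PR {n : ℕ} (R : Fin n → Set ℝ) : ℕ :=
  (Finset.univ.filter fun i => (ofLex (minDec R i)).2 = true).card +
    (Finset.univ.filter fun i => (ofLex (maxDec R i)).2 = true).card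

/-- The preorder `≤_α` on rectangles. -/
noncomputable def leAlpha {n : ℕ} (R S : Fin n → Set ℝ) : Prop :=
  alphaR R < alphaR S ∨ (alphaR R = alphaR S ∧ PR R ≤ PR S)

/-- Two rectangles are of the same type if all coordinatewise set differences
are bounded. -/
def SameType {n : ℕ} (R S : Fin n → Set ℝ) : Prop :=
  ∀ i, Bornology.IsBounded (R i \ S i) ∧ Bornology.IsBounded (S i \ R i)

/-- `I ⊆ ℝⁿ` is `δ`-significant. -/
def SetSignificant {n : ℕ} (δ : ℝ) (I : Set (Fin n → ℝ)) : Prop :=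
  ∃ p, p ∈ I ∧ (fun i => p i + δ) ∈ I

/-- Rectangle factor data: each factor is a nonempty ordered-connected real interval. -/
def IsRectFactors {n : ℕ} (R : Fin n → Set ℝ) : Prop :=
  ∀ i, (R i).Nonempty ∧ (R i).OrdConnected

/-! A morphism `𝕀^X ⟶ 𝕀^Y` vanishes at `p` as soon as some `q ≥ p` lies in `Y \ X`, or some
`q ≤ p` lies in `X \ Y`. For rectangles, moving one coordinate of `p` shows that every such
morphism is zero once some `X i \ Y i` is unbounded below or some `Y i \ X i` is unbounded above.
If `R` and `S` differ in type, one of the four differences `R i \ S i`, `S i \ R i` is unbounded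
below or above; two of the cases kill `χ`, and since `T` differs from `R` only by bounded sets, the
other two make `S i \ T i` unbounded below or `T i \ S i` unbounded above, which kills `ψ`. -/

section IntervalModuleHom

variable {k : Type} [Field k] {P : Type} [Preorder P] {I J : Set P}
  {hI : IsConvex I} {hJ : IsConvex J}

lemma subsingleton_intervalModule_obj_of_notMem {p : P} (hp : p ∉ I) :
    Subsingleton ((intervalModule k I hI).obj p) := by
  change Subsingleton (objSub k I p)
  rw [objSub, if_neg hp]
  infer_instance

lemma intervalModule_map_apply_coe {p q : P} (hpq : p ≤ q) (hp : p ∈ I) (hq : q ∈ I)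
    (x : objSub k I p) :
    ((intervalModule k I hI).map (homOfLE hpq) x : objSub k I q).1 = x.1 := by
  simp only [intervalModule, dif_pos (And.intro hp hq)]
  rfl

lemma intervalModule_hom_app_eq_zero_of_notMem_left
    (χ : intervalModule k I hI ⟶ intervalModule k J hJ) {p : P} (hp : p ∉ I) : χ.app p = 0 := by
  have := subsingleton_intervalModule_obj_of_notMem (k := k) (hI := hI) hp
  ext x
  simp [Subsingleton.elim x 0]

lemma intervalModule_hom_app_eq_zero_of_notMem_right
    (χ : intervalModule k I hI ⟶ intervalModule k J hJ) {p : P} (hp : p ∉ J) : χ.app p = 0 := by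
  have := subsingleton_intervalModule_obj_of_notMem (k := k) (hI := hJ) hp
  ext x
  exact Subsingleton.elim _ _

/-- The structure map of `𝕀^J` from `p` to `q` is injective, and it carries `χ.app p x` to the
image of `x` in `𝕀^I` at `q`, which is zero. -/
lemma intervalModule_hom_app_eq_zero_of_le
    (χ : intervalModule k I hI ⟶ intervalModule k J hJ) {p q : P} (hpq : p ≤ q)
    (hp : p ∈ J) (hqJ : q ∈ J) (hqI : q ∉ I) : χ.app p = 0 := by
  have := subsingleton_intervalModule_obj_of_notMem (k := k) (hI := hI) hqI
  ext x
  have hnat := NatTrans.naturality_apply χ (homOfLE hpq) x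
  rw [Subsingleton.elim ((intervalModule k I hI).map (homOfLE hpq) x) 0, map_zero] at hnat
  have hval := intervalModule_map_apply_coe (hI := hJ) hpq hp hqJ (χ.app p x)
  rw [← hnat] at hval
  exact Subtype.ext hval.symm

lemma intervalModule_hom_app_eq_zero_of_ge
    (χ : intervalModule k I hI ⟶ intervalModule k J hJ) {p q : P} (hqp : q ≤ p)
    (hp : p ∈ I) (hqI : q ∈ I) (hqJ : q ∉ J) : χ.app p = 0 := by
  have := subsingleton_intervalModule_obj_of_notMem (k := k) (hI := hJ) hqJ
  ext x
  let y : objSub k I q := ⟨x.1, by simp [objSub, hqI]⟩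
  have hy : (intervalModule k I hI).map (homOfLE hqp) y = x :=
    Subtype.ext (intervalModule_map_apply_coe hqp hqI hp y)
  have hnat := NatTrans.naturality_apply χ (homOfLE hqp) y
  rw [hy, Subsingleton.elim (χ.app q y) 0, map_zero] at hnat
  simpa using hnat

end IntervalModuleHom

section Rectangle

variable {n : ℕ} {X : Fin n → Set ℝ} {p : Fin n → ℝ} {i : Fin n} {x : ℝ}

lemma update_mem_rectSet (hp : p ∈ rectSet X) (hx : x ∈ X i) :
    Function.update p i x ∈ rectSet X := by
  intro j
  rcases eq_or_ne j i with rfl | hj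
  · simpa using hx
  · simpa [hj] using hp j

lemma update_notMem_rectSet (hx : x ∉ X i) : Function.update p i x ∉ rectSet X :=
  fun h => hx (by simpa using h i)

variable {k : Type} [Field k] {Y : Fin n → Set ℝ}
  {hX : IsConvex (rectSet X)} {hY : IsConvex (rectSet Y)}

lemma rect_hom_eq_zero_of_not_bddAbove_diff
    (χ : intervalModule k (rectSet X) hX ⟶ intervalModule k (rectSet Y) hY)
    (h : ¬ BddAbove (Y i \ X i)) : χ = 0 := by
  ext p : 2
  by_cases hp : p ∈ rectSet Y
  · obtain ⟨y, ⟨hyY, hyX⟩, hpy⟩ := not_bddAbove_iff.mp h (p i)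
    exact intervalModule_hom_app_eq_zero_of_le χ (le_update_self_iff.mpr hpy.le) hp
      (update_mem_rectSet hp hyY) (update_notMem_rectSet hyX)
  · exact intervalModule_hom_app_eq_zero_of_notMem_right χ hp

lemma rect_hom_eq_zero_of_not_bddBelow_diff
    (χ : intervalModule k (rectSet X) hX ⟶ intervalModule k (rectSet Y) hY)
    (h : ¬ BddBelow (X i \ Y i)) : χ = 0 := by
  ext p : 2
  by_cases hp : p ∈ rectSet X
  · obtain ⟨y, ⟨hyX, hyY⟩, hyp⟩ := not_bddBelow_iff.mp h (p i)
    exact intervalModule_hom_app_eq_zero_of_ge χ (update_le_self_iff.mpr hyp.le) hp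
      (update_mem_rectSet hp hyX) (update_notMem_rectSet hyY)
  · exact intervalModule_hom_app_eq_zero_of_notMem_left χ hp

end Rectangle

theorem rect_composite_through_other_type_zero_general
    (k : Type) [Field k] {n : ℕ} (R S T : Fin n → Set ℝ)
    (hR : IsRectFactors R) (hS : IsRectFactors S) (hT : IsRectFactors T)
    (hRT : SameType R T) (hRS : ¬ SameType R S)
    (χ : intervalModule k (rectSet R) (rectSet_convex R fun i => (hR i).2) ⟶
      intervalModule k (rectSet S) (rectSet_convex S fun i => (hS i).2))
    (ψ : intervalModule k (rectSet S) (rectSet_convex S fun i => (hS i).2) ⟶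
      intervalModule k (rectSet T) (rectSet_convex T fun i => (hT i).2)) :
    χ ≫ ψ = 0 := by
  obtain ⟨i, hi⟩ := not_forall.mp hRS
  simp only [not_and_or, isBounded_iff_bddBelow_bddAbove] at hi
  obtain ⟨⟨-, hRT_above⟩, ⟨hTR_below, -⟩⟩ :=
    (hRT i).imp isBounded_iff_bddBelow_bddAbove.mp isBounded_iff_bddBelow_bddAbove.mp
  -- `R \ S ⊆ (R \ T) ∪ (T \ S)` and `S \ R ⊆ (S \ T) ∪ (T \ R)`, with `R \ T`, `T \ R` bounded
  have hχψ : χ = 0 ∨ ψ = 0 := by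
    rcases hi with (h | h) | (h | h)
    · exact .inl (rect_hom_eq_zero_of_not_bddBelow_diff χ h)
    · refine .inr (rect_hom_eq_zero_of_not_bddAbove_diff (i := i) ψ fun hTS => h ?_)
      exact (hRT_above.union hTS).mono (sdiff_triangle _ _ _)
    · refine .inr (rect_hom_eq_zero_of_not_bddBelow_diff (i := i) ψ fun hST => h ?_)
      exact (hST.union hTR_below).mono (sdiff_triangle _ _ _)
    · exact .inl (rect_hom_eq_zero_of_not_bddAbove_diff χ h)
  rcases hχψ with h | h <;> simp [h]

/-- If `R` and `T` are rectangles of the same type and `S` is a rectangle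
of a different type, then any composition `𝕀^R ⟶ 𝕀^S ⟶ 𝕀^T` is zero. -/
theorem rect_composite_through_other_type_zero
    (k : Type) [Field k] {n : ℕ} (R S T : Fin n → Set ℝ)
    (hR : IsRectFactors R) (hS : IsRectFactors S) (hT : IsRectFactors T)
    (hRT : SameType R T) (hRS : ¬ SameType R S) (hST : ¬ SameType S T)
    (χ : intervalModule k (rectSet R) (rectSet_convex R fun i => (hR i).2) ⟶
      intervalModule k (rectSet S) (rectSet_convex S fun i => (hS i).2))
    (ψ : intervalModule k (rectSet S) (rectSet_convex S fun i => (hS i).2) ⟶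
      intervalModule k (rectSet T) (rectSet_convex T fun i => (hT i).2)) :
    χ ≫ ψ = 0 :=
  rect_composite_through_other_type_zero_general k R S T hR hS hT hRT hRS χ ψ
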